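/- Let G be a group of increasing homeomorphisms of ℝ that is uniformly quasisymmetric: there exists k ≥ 1 such that every g ∈ G is k-quasisymmetric. Suppose g ∈ G fixes 0 and has a fixed point y < 0 with g(x) > x for all x ∈ (-1, y) and g(-1) > -1, g(-1) < y. Then one obtains a contradiction; i.e., no such g exists in G. -/

import Mathlib

/-- `f` is `k`-quasisymmetric. -/
def QS (k : ℝ) (f : ℝ → ℝ) : Prop :=
  ∀ x t : ℝ, 0 < t →
    1 / k ≤ (f (x + t) - f x) / (f x - f (x - t)) ∧
    (f (x + t) - f x) / (f x - f (x - t)) ≤ k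

/-!
The iterates `g^n` all lie in `G`, so they are `k`-quasisymmetric for one `k`. Quasisymmetry
bounds the distortion of the triple `-1 < y < 0` uniformly: since `g^n` fixes `y` and `0`,
`-y ≤ C * (y - g^n (-1))`, where `C = (1 + k)^m * k` comes from doubling `[-1, y]` beyond `y`
until it covers `[y, 0]`. But the orbit of `-1` under `g` increases to the fixed point `y`, so the right-hand side tends to `0`.
-/

open Filter Topology Set

section Orbit

variable {α : Type*} [ConditionallyCompleteLinearOrder α] [TopologicalSpace α] [OrderTopology α]

theorem tendsto_iterate_of_lt_map {g : α → α} {a x y : α} (hmono : Monotone g)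
    (hcont : Continuous g) (hy : g y = y) (hlt : ∀ z ∈ Ioo a y, z < g z) (hx : x ∈ Ioo a y) :
    Tendsto (fun n => g^[n] x) atTop (𝓝 y) := by
  have horbit_mono : Monotone fun n => g^[n] x :=
    hmono.monotone_iterate_of_le_map (hlt x hx).le
  have horbit_le : ∀ n, g^[n] x ≤ y := fun n =>
    (Function.iterate_fixed hy n).symm ▸ hmono.iterate n hx.2.le
  have hbdd : BddAbove (range fun n => g^[n] x) := ⟨y, forall_mem_range.2 horbit_le⟩
  obtain ⟨L, htend, hxL, hLy⟩ : ∃ L, Tendsto (fun n => g^[n] x) atTop (𝓝 L) ∧ x ≤ L ∧ L ≤ y :=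
    ⟨_, tendsto_atTop_ciSup horbit_mono hbdd, le_ciSup hbdd 0, ciSup_le horbit_le⟩
  have hfixL : g L = L := isFixedPt_of_tendsto_iterate htend hcont.continuousAt
  rcases hLy.lt_or_eq with hLy | rfl
  · exact absurd hfixL (hlt L ⟨hx.1.trans_le hxL, hLy⟩).ne'
  · exact htend

end Orbit

namespace QS

variable {k : ℝ} {f : ℝ → ℝ}

theorem pos (hf : StrictMono f) (hqs : QS k f) : 0 < k :=
  (div_pos (sub_pos.2 (hf (lt_add_one 0))) (sub_pos.2 (hf (sub_one_lt 0)))).trans_le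
    (hqs 0 1 one_pos).2

theorem sub_le_mul (hf : StrictMono f) (hqs : QS k f) (x : ℝ) {t : ℝ} (ht : 0 < t) :
    f (x + t) - f x ≤ k * (f x - f (x - t)) :=
  (div_le_iff₀ (sub_pos.2 (hf (sub_lt_self x ht)))).1 (hqs x t ht).2

theorem sub_le_pow_mul (hf : StrictMono f) (hqs : QS k f) (x : ℝ) {t : ℝ} (ht : 0 < t)
    (n : ℕ) : f (x + 2 ^ n * t) - f x ≤ (1 + k) ^ n * (f (x + t) - f x) := by
  induction n with
  | zero => simp
  | succ n ih =>
    set s := 2 ^ n * t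
    have hs : 0 < s := by positivity
    have hstep : f (x + s + s) - f (x + s) ≤ k * (f (x + s) - f x) := by
      simpa using hqs.sub_le_mul hf (x + s) hs
    rw [show x + 2 ^ (n + 1) * t = x + s + s by ring]
    calc f (x + s + s) - f x
        = (f (x + s + s) - f (x + s)) + (f (x + s) - f x) := by ring
      _ ≤ (1 + k) * (f (x + s) - f x) := by linarith
      _ ≤ (1 + k) * ((1 + k) ^ n * (f (x + t) - f x)) := by
        gcongr
        linarith [hqs.pos hf]
      _ = (1 + k) ^ (n + 1) * (f (x + t) - f x) := by ring

theorem exists_sub_le_mul_sub {a x : ℝ} (hax : a < x) (b : ℝ) :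
    ∃ C, ∀ f, StrictMono f → QS k f → f b - f x ≤ C * (f x - f a) := by
  obtain ⟨m, hm⟩ := pow_unbounded_of_one_lt ((b - x) / (x - a)) one_lt_two
  have hb : b ≤ x + 2 ^ m * (x - a) := by
    rw [div_lt_iff₀ (sub_pos.2 hax)] at hm
    linarith
  refine ⟨(1 + k) ^ m * k, fun f hf hqs => ?_⟩
  have hk := hqs.pos hf
  calc f b - f x ≤ f (x + 2 ^ m * (x - a)) - f x := by gcongr; exact hf.monotone hb
    _ ≤ (1 + k) ^ m * (f (x + (x - a)) - f x) := hqs.sub_le_pow_mul hf x (sub_pos.2 hax) m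
    _ ≤ (1 + k) ^ m * (k * (f x - f (x - (x - a)))) := by
      gcongr
      exact hqs.sub_le_mul hf x (sub_pos.2 hax)
    _ = (1 + k) ^ m * k * (f x - f a) := by rw [sub_sub_cancel]; ring

end QS

theorem stmt_9_general (G : Subgroup (Equiv.Perm ℝ)) (k : ℝ)
    (hG : ∀ h ∈ G, StrictMono ⇑h ∧ Continuous ⇑h ∧ QS k ⇑h)
    (g : Equiv.Perm ℝ) (hg : g ∈ G) (hg0 : g 0 = 0)
    (y : ℝ) (hy : y < 0) (hfix : g y = y)
    (hpush : ∀ x ∈ Set.Ioo (-1 : ℝ) y, x < g x)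
    (h1 : -1 < g (-1)) (h2 : g (-1) < y) :
    False := by
  obtain ⟨C, hC⟩ := QS.exists_sub_le_mul_sub (k := k) (h1.trans h2) 0
  have horbit : Tendsto (fun n : ℕ => (g ^ n) (-1)) atTop (𝓝 y) := by
    obtain ⟨hmono, hcont, -⟩ := hG g hg
    rw [← tendsto_add_atTop_iff_nat 1]
    simpa only [Equiv.Perm.coe_pow, Function.iterate_succ_apply] using
      tendsto_iterate_of_lt_map hmono.monotone hcont hfix hpush ⟨h1, h2⟩
  have hbound : ∀ n : ℕ, -y ≤ C * (y - (g ^ n) (-1)) := fun n => by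
    obtain ⟨hmono, -, hqs⟩ := hG _ (pow_mem hg n)
    simpa [Equiv.Perm.pow_apply_eq_self_of_apply_eq_self, hg0, hfix] using hC _ hmono hqs
  have hlim := ge_of_tendsto' ((tendsto_const_nhds.sub horbit).const_mul C) hbound
  rw [sub_self, mul_zero] at hlim
  linarith

theorem stmt_9 (G : Subgroup (Equiv.Perm ℝ)) (k : ℝ) (hk : 1 ≤ k)
    (hG : ∀ h ∈ G, StrictMono ⇑h ∧ Continuous ⇑h ∧ QS k ⇑h)
    (g : Equiv.Perm ℝ) (hg : g ∈ G) (hg0 : g 0 = 0)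
    (y : ℝ) (hy : y < 0) (hfix : g y = y)
    (hpush : ∀ x ∈ Set.Ioo (-1 : ℝ) y, x < g x)
    (h1 : -1 < g (-1)) (h2 : g (-1) < y) :
    False :=
  stmt_9_general G k hG g hg hg0 y hy hfix hpush h1 h2
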